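/- arXiv:2011.02670 — 3 statements merged into one kernel-verified Lean document; each statement's English description precedes it below -/
import Mathlib

section
/- Let Π₀ and Π₁ be orthogonal projections on an N-dimensional complex Hilbert space H. Then there exists an orthogonal decomposition of H into two-dimensional subspaces S_j (j = 1,…,ℓ) and N − 2ℓ one-dimensional subspaces T_j^{(bc)} indexed by b,c ∈ {0,1}, such that: (1) each S_j admits orthonormal bases (|α_j⟩, |α_j^⊥⟩) and (|β_j⟩, |β_j^⊥⟩) with Π₀|α_j⟩ = |α_j⟩, Π₀|α_j^⊥⟩ = 0, Π₁|β_j⟩ = |β_j⟩, Π₁|β_j^⊥⟩ = 0, and setting p_j := ⟨α_j|Π₁|α_j⟩, one has 0 < p_j < 1, |α_j⟩ = √p_j |β_j⟩ + √(1−p_j) |β_j^⊥⟩, and |β_j⟩ = √p_j |α_j⟩ + √(1−p_j) |α_j^⊥⟩; (2) each T_j^{(bc)} is spanned by a unit vector |α_j^{(bc)}⟩ with Π₀|α_j^{(bc)}⟩ = b·|α_j^{(bc)}⟩ and Π₁|α_j^{(bc)}⟩ = c·|α_j^{(bc)}⟩. -/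
open scoped ComplexInnerProductSpace

/-!
Induct on the dimension of a subspace `V` invariant under both projections. The orthogonal
complement inside `V` of an invariant subspace is again invariant (the projections are
symmetric), so it suffices to split off one invariant block of dimension one or two.
If `P0` vanishes on `V`, a vector `v` or `P1 v` spans such a block. Otherwise `P0 P1`
preserves `V ⊓ range P0` and has a unit eigenvector `α` there, with eigenvalue
`p = ‖P1 α‖ ^ 2`. For `p ∈ {0, 1}`, `α` is a common eigenvector. Otherwise
`β = P1 α / √p` and `β^⊥ = (α - P1 α) / √(1 - p)` are orthonormal with
`α = √p β + √(1 - p) β^⊥`, and rotating this pair gives `α^⊥ = √(1 - p) β - √p β^⊥`,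
which `P0` kills because `P0 β = √p α` and `P0 β^⊥ = √(1 - p) α`.
-/

variable {E : Type*} [NormedAddCommGroup E] [InnerProductSpace ℂ E]

namespace LinearMap.IsSymmetricProjection

variable {P : Module.End ℂ E} (hP : P.IsSymmetricProjection)
include hP

lemma apply_apply (x : E) : P (P x) = P x := by
  simpa using congr($hP.isIdempotentElem x)

lemma inner_apply_sub_apply_eq_zero (x : E) : ⟪P x, x - P x⟫ = 0 := by
  rw [hP.isSymmetric, map_sub, hP.apply_apply, sub_self, inner_zero_right]

lemma inner_self_apply_eq_norm_sq (x : E) : ⟪x, P x⟫ = (‖P x‖ ^ 2 : ℝ) := by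
  rw [← hP.apply_apply x, ← hP.isSymmetric, hP.apply_apply, inner_self_eq_norm_sq_to_K]
  simp

lemma norm_sq_apply_add_norm_sq_sub_apply (x : E) : ‖P x‖ ^ 2 + ‖x - P x‖ ^ 2 = ‖x‖ ^ 2 := by
  have := norm_add_sq_eq_norm_sq_add_norm_sq_of_inner_eq_zero _ _
    (hP.inner_apply_sub_apply_eq_zero x)
  rw [add_sub_cancel] at this
  rw [sq, sq, sq, this]

end LinearMap.IsSymmetricProjection

lemma Orthonormal.sum_elim {ι κ : Type*} {f : ι → E} {g : κ → E} (hf : Orthonormal ℂ f)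
    (hg : Orthonormal ℂ g) (hfg : ∀ i j, ⟪f i, g j⟫ = 0) : Orthonormal ℂ (Sum.elim f g) := by
  classical
  rw [orthonormal_iff_ite] at hf hg ⊢
  rintro (i | i) (j | j)
  · simpa using hf i j
  · simpa using hfg i j
  · simpa using inner_eq_zero_symm.mp (hfg j i)
  · simpa using hg i j

/- `(s • u + t • v, t • u - s • v)` is the image of the orthonormal pair `(u, v)` under an
orthogonal 2 × 2 matrix when `s ^ 2 + t ^ 2 = 1`. -/
lemma inner_rotate_eq_zero {u v : E} (hu : ‖u‖ = 1) (hv : ‖v‖ = 1) (huv : ⟪u, v⟫ = 0)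
    (s t : ℝ) : ⟪(s : ℂ) • u + (t : ℂ) • v, (t : ℂ) • u - (s : ℂ) • v⟫ = 0 := by
  have hvu : ⟪v, u⟫ = 0 := inner_eq_zero_symm.mp huv
  simp only [inner_add_left, inner_sub_right, inner_smul_left, inner_smul_right, huv, hvu,
    inner_self_eq_norm_sq_to_K, hu, hv, Complex.conj_ofReal]
  ring

lemma norm_rotate_eq_one {u v : E} (hu : ‖u‖ = 1) (hv : ‖v‖ = 1) (huv : ⟪u, v⟫ = 0)
    {s t : ℝ} (hst : s ^ 2 + t ^ 2 = 1) : ‖(t : ℂ) • u - (s : ℂ) • v‖ = 1 := by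
  have h := norm_add_sq_eq_norm_sq_add_norm_sq_of_inner_eq_zero (𝕜 := ℂ) ((t : ℂ) • u)
    (-((s : ℂ) • v))
    (by rw [inner_neg_right, inner_smul_left, inner_smul_right, huv]; simp)
  rw [← sub_eq_add_neg, norm_neg, norm_smul, norm_smul, hu, hv] at h
  simp only [Complex.norm_real, Real.norm_eq_abs, mul_one, ← sq, sq_abs] at h
  rw [add_comm, hst] at h
  exact (pow_eq_one_iff_of_nonneg (norm_nonneg _) two_ne_zero).mp h

lemma eq_add_rotate (u v : E) {s t : ℝ} (hst : s ^ 2 + t ^ 2 = 1) :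
    u = (s : ℂ) • ((s : ℂ) • u + (t : ℂ) • v) + (t : ℂ) • ((t : ℂ) • u - (s : ℂ) • v) := by
  calc u = ((s ^ 2 + t ^ 2 : ℝ) : ℂ) • u := by rw [hst]; simp
    _ = _ := by push_cast; module

lemma eq_sub_rotate (u v : E) {s t : ℝ} (hst : s ^ 2 + t ^ 2 = 1) :
    v = (t : ℂ) • ((s : ℂ) • u + (t : ℂ) • v) - (s : ℂ) • ((t : ℂ) • u - (s : ℂ) • v) := by
  calc v = ((s ^ 2 + t ^ 2 : ℝ) : ℂ) • v := by rw [hst]; simp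
    _ = _ := by push_cast; module

lemma Module.End.exists_norm_eq_one_apply_eq_smul_of_mem_invtSubmodule [FiniteDimensional ℂ E]
    {f : Module.End ℂ E} {K : Submodule ℂ E} (hK : K ≠ ⊥) (hf : K ∈ f.invtSubmodule) :
    ∃ x ∈ K, ‖x‖ = 1 ∧ ∃ μ : ℂ, f x = μ • x := by
  have : Nontrivial K := Submodule.nontrivial_iff_ne_bot.mpr hK
  obtain ⟨μ, hμ⟩ := Module.End.exists_eigenvalue (f.restrict hf)
  obtain ⟨⟨v, hvK⟩, hv⟩ := hμ.exists_hasEigenvector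
  have hv0 : v ≠ 0 := fun h => hv.2 (Subtype.ext h)
  have hfv : f v = μ • v := congrArg Subtype.val hv.apply_eq_smul
  refine ⟨(‖v‖ : ℂ)⁻¹ • v, K.smul_mem _ hvK, norm_smul_inv_norm hv0, μ, ?_⟩
  rw [map_smul, hfv, smul_comm]

lemma exists_sigma_fin_equiv {ι κ : Type*} [Finite ι] [DecidableEq κ] (lab : ι → κ) :
    ∃ (m : κ → ℕ) (e : (Σ k, Fin (m k)) ≃ ι), ∀ k i, lab (e ⟨k, i⟩) = k := by
  have := Fintype.ofFinite ι
  exact ⟨fun k => Fintype.card {j // lab j = k},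
    (Equiv.sigmaCongrRight fun _ => (Fintype.equivFin _).symm).trans (Equiv.sigmaFiberEquiv lab),
    fun _ i => ((Fintype.equivFin _).symm i).2⟩

section Jordan

variable (P0 P1 : Module.End ℂ E)

def IsJordanPair (α αp β βp : E) : Prop :=
  P0 α = α ∧ P0 αp = 0 ∧ P1 β = β ∧ P1 βp = 0 ∧
  ‖β‖ = 1 ∧ ‖βp‖ = 1 ∧ ⟪β, βp⟫ = 0 ∧
  β ∈ Submodule.span ℂ {α, αp} ∧ βp ∈ Submodule.span ℂ {α, αp} ∧
  (0 < (⟪α, P1 α⟫).re ∧ (⟪α, P1 α⟫).re < 1) ∧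
  α = (Real.sqrt ((⟪α, P1 α⟫).re) : ℂ) • β + (Real.sqrt (1 - (⟪α, P1 α⟫).re) : ℂ) • βp ∧
  β = (Real.sqrt ((⟪α, P1 α⟫).re) : ℂ) • α + (Real.sqrt (1 - (⟪α, P1 α⟫).re) : ℂ) • αp

def IsJordanLine (w : E) (b c : Bool) : Prop :=
  ‖w‖ = 1 ∧ P0 w = (if b then (1 : ℂ) else 0) • w ∧ P1 w = (if c then (1 : ℂ) else 0) • w

def HasJordanBasis (V : Submodule ℂ E) : Prop :=
  ∃ (ιS ιT : Type) (lab : ιT → Bool × Bool) (α αp β βp : ιS → E) (τ : ιT → E),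
    Orthonormal ℂ (Sum.elim (Sum.elim α αp) τ) ∧
    Submodule.span ℂ (Set.range (Sum.elim (Sum.elim α αp) τ)) = V ∧
    (∀ j, IsJordanPair P0 P1 (α j) (αp j) (β j) (βp j)) ∧
    ∀ j, IsJordanLine P0 P1 (τ j) (lab j).1 (lab j).2

def HasJordanBlock (V : Submodule ℂ E) : Prop :=
  ∃ W ≤ V, W ≠ ⊥ ∧ W ∈ P0.invtSubmodule ∧ W ∈ P1.invtSubmodule ∧ HasJordanBasis P0 P1 W

variable {P0 P1}

lemma hasJordanBasis_bot : HasJordanBasis P0 P1 ⊥ :=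
  ⟨Empty, Empty, Empty.elim, Empty.elim, Empty.elim, Empty.elim, Empty.elim, Empty.elim,
    Orthonormal.of_isEmpty _,
    by rw [Set.range_eq_empty, Submodule.span_empty], nofun, nofun⟩

lemma HasJordanBasis.sup {V W : Submodule ℂ E} (hV : HasJordanBasis P0 P1 V)
    (hW : HasJordanBasis P0 P1 W) (hVW : V ⟂ W) : HasJordanBasis P0 P1 (V ⊔ W) := by
  obtain ⟨ιS, ιT, lab, α, αp, β, βp, τ, hON, hspan, hpair, hline⟩ := hV
  obtain ⟨ιS', ιT', lab', α', αp', β', βp', τ', hON', hspan', hpair', hline'⟩ := hW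
  set F := Sum.elim (Sum.elim α αp) τ
  set F' := Sum.elim (Sum.elim α' αp') τ'
  let e := (Equiv.sumCongr (Equiv.sumSumSumComm ιS ιS' ιS ιS') (Equiv.refl _)).trans
    (Equiv.sumSumSumComm (ιS ⊕ ιS) (ιS' ⊕ ιS') ιT ιT')
  have hFF' : Sum.elim (Sum.elim (Sum.elim α α') (Sum.elim αp αp')) (Sum.elim τ τ') =
      Sum.elim F F' ∘ e := by
    funext x
    rcases x with ((i | i) | (i | i)) | (i | i) <;> rfl
  have hFF'_inner : ∀ i j, ⟪F i, F' j⟫ = 0 := fun i j =>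
    hVW.inner_eq (hspan ▸ Submodule.subset_span (Set.mem_range_self i))
      (hspan' ▸ Submodule.subset_span (Set.mem_range_self j))
  refine ⟨ιS ⊕ ιS', ιT ⊕ ιT', Sum.elim lab lab', Sum.elim α α', Sum.elim αp αp',
    Sum.elim β β', Sum.elim βp βp', Sum.elim τ τ', ?_, ?_, ?_, ?_⟩
  · rw [hFF']
    exact (hON.sum_elim hON' hFF'_inner).comp e e.injective
  · rw [hFF', e.surjective.range_comp, Set.Sum.elim_range, Submodule.span_union, hspan, hspan']
  · rintro (j | j)
    exacts [hpair j, hpair' j]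
  · rintro (j | j)
    exacts [hline j, hline' j]

lemma IsJordanLine.hasJordanBlock {V : Submodule ℂ E} {w : E} {b c : Bool} (hwV : w ∈ V)
    (h : IsJordanLine P0 P1 w b c) : HasJordanBlock P0 P1 V := by
  obtain ⟨hw, h0, h1⟩ := h
  have hw0 : w ≠ 0 := by rintro rfl; simp at hw
  have hinv {P : Module.End ℂ E} {k : ℂ} (hP : P w = k • w) : ℂ ∙ w ∈ P.invtSubmodule := by
    rw [Module.End.mem_invtSubmodule, Submodule.span_le, Set.singleton_subset_iff,
      SetLike.mem_coe, Submodule.mem_comap, hP]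
    exact Submodule.smul_mem _ _ (Submodule.mem_span_singleton_self w)
  refine ⟨ℂ ∙ w, (Submodule.span_singleton_le_iff_mem w V).mpr hwV, by simpa using hw0,
    hinv h0, hinv h1, Empty, Unit, fun _ => (b, c), Empty.elim, Empty.elim, Empty.elim,
    Empty.elim, fun _ => w, ?_, ?_, nofun, fun _ => ⟨hw, h0, h1⟩⟩
  · exact (Orthonormal.of_isEmpty _).sum_elim (orthonormal_subsingleton_iff.mpr fun _ => hw)
      nofun
  · simp [Set.Sum.elim_range, Set.range_eq_empty]

section Pair

variable {α αp β βp : E}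

lemma IsJordanPair.span_mem_invtSubmodule_left (h : IsJordanPair P0 P1 α αp β βp) :
    Submodule.span ℂ {α, αp} ∈ P0.invtSubmodule := by
  rw [Module.End.mem_invtSubmodule, Submodule.span_le]
  refine Set.insert_subset ?_ (Set.singleton_subset_iff.mpr ?_)
  · show P0 α ∈ Submodule.span ℂ {α, αp}
    rw [h.1]
    exact Submodule.subset_span (by simp)
  · show P0 αp ∈ Submodule.span ℂ {α, αp}
    rw [h.2.1]
    exact Submodule.zero_mem _

lemma IsJordanPair.span_mem_invtSubmodule_right (h : IsJordanPair P0 P1 α αp β βp) :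
    Submodule.span ℂ {α, αp} ∈ P1.invtSubmodule := by
  obtain ⟨-, -, h1β, h1βp, -, -, -, hβW, -, ⟨-, hp1⟩, hα_eq, hβ_eq⟩ := h
  set W := Submodule.span ℂ {α, αp}
  set s := Real.sqrt (⟪α, P1 α⟫).re
  have ht : (Real.sqrt (1 - (⟪α, P1 α⟫).re) : ℂ) ≠ 0 := by
    exact_mod_cast (Real.sqrt_pos.mpr (by linarith)).ne'
  set t := Real.sqrt (1 - (⟪α, P1 α⟫).re)
  clear_value s t
  have h1α : P1 α = (s : ℂ) • β := by
    conv_lhs => rw [hα_eq]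
    rw [map_add, map_smul, map_smul, h1β, h1βp, smul_zero, add_zero]
  have h1αp : (t : ℂ) • P1 αp = β - (s : ℂ) • P1 α := by
    conv_rhs => rw [← h1β, hβ_eq]
    rw [map_add, map_smul, map_smul, add_sub_cancel_left]
  rw [Module.End.mem_invtSubmodule, Submodule.span_le]
  refine Set.insert_subset ?_ (Set.singleton_subset_iff.mpr ?_)
  · show P1 α ∈ W
    rw [h1α]
    exact W.smul_mem _ hβW
  · show P1 αp ∈ W
    refine (W.smul_mem_iff ht).mp ?_
    rw [h1αp, h1α]
    exact W.sub_mem hβW (W.smul_mem _ (W.smul_mem _ hβW))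

lemma IsJordanPair.hasJordanBasis_span (hα : ‖α‖ = 1) (hαp : ‖αp‖ = 1) (hααp : ⟪α, αp⟫ = 0)
    (h : IsJordanPair P0 P1 α αp β βp) : HasJordanBasis P0 P1 (Submodule.span ℂ {α, αp}) := by
  refine ⟨Unit, Empty, Empty.elim, fun _ => α, fun _ => αp, fun _ => β, fun _ => βp,
    Empty.elim, ?_, ?_, fun _ => h, nofun⟩
  · refine Orthonormal.sum_elim ?_ (Orthonormal.of_isEmpty _) nofun
    exact (orthonormal_subsingleton_iff.mpr fun _ => hα).sum_elim
      (orthonormal_subsingleton_iff.mpr fun _ => hαp) fun _ _ => hααp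
  · simp only [Set.Sum.elim_range, Set.range_const, Set.range_eq_empty, Set.union_empty]
    rw [Set.singleton_union]

lemma IsJordanPair.hasJordanBlock {V : Submodule ℂ E} (hαV : α ∈ V) (hαpV : αp ∈ V)
    (hα : ‖α‖ = 1) (hαp : ‖αp‖ = 1) (hααp : ⟪α, αp⟫ = 0) (h : IsJordanPair P0 P1 α αp β βp) :
    HasJordanBlock P0 P1 V := by
  refine ⟨_, Submodule.span_le.mpr (Set.insert_subset hαV (Set.singleton_subset_iff.mpr hαpV)),
    ?_, h.span_mem_invtSubmodule_left, h.span_mem_invtSubmodule_right,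
    h.hasJordanBasis_span hα hαp hααp⟩
  rw [Submodule.ne_bot_iff]
  exact ⟨α, Submodule.subset_span (by simp), by rintro rfl; simp at hα⟩

lemma isJordanPair_rotate {s t : ℝ} (hs : 0 < s) (ht : 0 < t)
    (hst : s ^ 2 + t ^ 2 = 1) (hβ : ‖β‖ = 1) (hβp : ‖βp‖ = 1) (hββp : ⟪β, βp⟫ = 0)
    (hα : α = (s : ℂ) • β + (t : ℂ) • βp) (h0 : P0 α = α) (h0β : P0 β = (s : ℂ) • α)
    (h0βp : P0 βp = (t : ℂ) • α) (h1β : P1 β = β) (h1βp : P1 βp = 0) :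
    IsJordanPair P0 P1 α ((t : ℂ) • β - (s : ℂ) • βp) β βp := by
  set αp := (t : ℂ) • β - (s : ℂ) • βp
  have hβ_eq : β = (s : ℂ) • α + (t : ℂ) • αp := hα ▸ eq_add_rotate β βp hst
  have hβp_eq : βp = (t : ℂ) • α - (s : ℂ) • αp := hα ▸ eq_sub_rotate β βp hst
  have h0αp : P0 αp = 0 := by
    rw [map_sub, map_smul, map_smul, h0β, h0βp, smul_smul, smul_smul, mul_comm, sub_self]
  have hp : (⟪α, P1 α⟫).re = s ^ 2 := by
    have h1α : P1 α = (s : ℂ) • β := by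
      conv_lhs => rw [hα]
      rw [map_add, map_smul, map_smul, h1β, h1βp, smul_zero, add_zero]
    rw [h1α, hα, inner_smul_right, inner_add_left, inner_smul_left, inner_smul_left,
      inner_self_eq_norm_sq_to_K, hβ, inner_eq_zero_symm.mp hββp]
    simp [sq]
  have hαW : α ∈ Submodule.span ℂ {α, αp} := Submodule.subset_span (by simp)
  have hαpW : αp ∈ Submodule.span ℂ {α, αp} := Submodule.subset_span (by simp)
  unfold IsJordanPair
  rw [hp, show 1 - s ^ 2 = t ^ 2 by linarith, Real.sqrt_sq hs.le, Real.sqrt_sq ht.le]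
  refine ⟨h0, h0αp, h1β, h1βp, hβ, hβp, hββp, ?_, ?_, ⟨by positivity, by nlinarith⟩, hα, hβ_eq⟩
  · rw [hβ_eq]
    exact Submodule.add_mem _ (Submodule.smul_mem _ _ hαW) (Submodule.smul_mem _ _ hαpW)
  · rw [hβp_eq]
    exact Submodule.sub_mem _ (Submodule.smul_mem _ _ hαW) (Submodule.smul_mem _ _ hαpW)

end Pair

end Jordan

section Projections

variable {P0 P1 : Module.End ℂ E} (hP0 : P0.IsSymmetricProjection) (hP1 : P1.IsSymmetricProjection)
include hP0 hP1

lemma hasJordanBlock_of_apply_eq_smul {V : Submodule ℂ E} (hV1 : V ∈ P1.invtSubmodule)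
    {α : E} {μ : ℂ} (hαV : α ∈ V) (hα : ‖α‖ = 1) (h0 : P0 α = α) (hμ : P0 (P1 α) = μ • α)
    (hne0 : P1 α ≠ 0) (hne1 : P1 α ≠ α) : HasJordanBlock P0 P1 V := by
  set s := ‖P1 α‖
  set t := ‖α - P1 α‖
  have hs : 0 < s := norm_pos_iff.mpr hne0
  have ht : 0 < t := norm_pos_iff.mpr (sub_ne_zero.mpr hne1.symm)
  have hs' : (s : ℂ) ≠ 0 := by exact_mod_cast hs.ne'
  have ht' : (t : ℂ) ≠ 0 := by exact_mod_cast ht.ne'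
  have hst : s ^ 2 + t ^ 2 = 1 := by rw [hP1.norm_sq_apply_add_norm_sq_sub_apply, hα, one_pow]
  have hμ' : P0 (P1 α) = (s : ℂ) ^ 2 • α := by
    have : μ = ⟪α, P1 α⟫ := by
      calc μ = ⟪α, μ • α⟫ := by rw [inner_smul_right, inner_self_eq_norm_sq_to_K, hα]; simp
        _ = ⟪α, P1 α⟫ := by rw [← hμ, ← hP0.isSymmetric, h0]
    rw [hμ, this, hP1.inner_self_apply_eq_norm_sq]
    push_cast; rfl
  set β := (s : ℂ)⁻¹ • P1 α
  set βp := (t : ℂ)⁻¹ • (α - P1 α)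
  have hβ : ‖β‖ = 1 := norm_smul_inv_norm hne0
  have hβp : ‖βp‖ = 1 := norm_smul_inv_norm (sub_ne_zero.mpr hne1.symm)
  have hββp : ⟪β, βp⟫ = 0 := by
    simp only [β, βp, inner_smul_left, inner_smul_right, hP1.inner_apply_sub_apply_eq_zero,
      mul_zero]
  have hα_eq : α = (s : ℂ) • β + (t : ℂ) • βp := by
    simp only [β, βp, smul_smul, mul_inv_cancel₀ hs', mul_inv_cancel₀ ht', one_smul]
    abel
  have h0β : P0 β = (s : ℂ) • α := by
    rw [map_smul, hμ', smul_smul]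
    congr 1
    field_simp
  have h0βp : P0 βp = (t : ℂ) • α := by
    have ht2 : (t : ℂ) ^ 2 = 1 - (s : ℂ) ^ 2 := by
      rw [eq_sub_iff_add_eq, add_comm]; exact_mod_cast hst
    rw [map_smul, map_sub, h0, hμ', show α - (s : ℂ) ^ 2 • α = (t : ℂ) ^ 2 • α by
      rw [ht2, sub_smul, one_smul], smul_smul]
    congr 1
    field_simp
  have hβV : β ∈ V := V.smul_mem _ (hV1 hαV)
  have hβpV : βp ∈ V := V.smul_mem _ (V.sub_mem hαV (hV1 hαV))
  refine IsJordanPair.hasJordanBlock hαV (V.sub_mem (V.smul_mem _ hβV) (V.smul_mem _ hβpV)) hα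
    (norm_rotate_eq_one hβ hβp hββp hst) (hα_eq ▸ inner_rotate_eq_zero hβ hβp hββp s t)
    (isJordanPair_rotate hs ht hst hβ hβp hββp hα_eq h0 h0β h0βp ?_ ?_)
  · rw [map_smul, hP1.apply_apply]
  · rw [map_smul, map_sub, hP1.apply_apply, sub_self, smul_zero]

lemma hasJordanBlock_of_ne_bot [FiniteDimensional ℂ E] {V : Submodule ℂ E}
    (hV0 : V ∈ P0.invtSubmodule) (hV1 : V ∈ P1.invtSubmodule) (hV : V ≠ ⊥) :
    HasJordanBlock P0 P1 V := by
  by_cases hker : ∀ v ∈ V, P0 v = 0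
  · obtain ⟨v, hvV, hv⟩ := Submodule.exists_mem_ne_zero_of_ne_bot hV
    by_cases h1v : P1 v = 0
    · exact IsJordanLine.hasJordanBlock (b := false) (c := false) (V.smul_mem _ hvV)
        ⟨norm_smul_inv_norm hv, by simp [hker v hvV], by simp [h1v]⟩
    · exact IsJordanLine.hasJordanBlock (b := false) (c := true) (V.smul_mem _ (hV1 hvV))
        ⟨norm_smul_inv_norm h1v, by simp [hker _ (hV1 hvV)], by simp [hP1.apply_apply]⟩
  push Not at hker
  obtain ⟨v, hvV, hv⟩ := hker
  have hK : V ⊓ LinearMap.range P0 ≠ ⊥ :=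
    Submodule.ne_bot_iff _ |>.mpr ⟨P0 v, ⟨hV0 hvV, LinearMap.mem_range_self P0 v⟩, hv⟩
  have hKinv : V ⊓ LinearMap.range P0 ∈ (P0 * P1).invtSubmodule := fun x hx =>
    ⟨hV0 (hV1 hx.1), LinearMap.mem_range_self P0 (P1 x)⟩
  obtain ⟨α, ⟨hαV, hαP0⟩, hα, μ, hμ⟩ :=
    Module.End.exists_norm_eq_one_apply_eq_smul_of_mem_invtSubmodule hK hKinv
  have h0 : P0 α = α := (LinearMap.IsIdempotentElem.mem_range_iff hP0.isIdempotentElem).mp hαP0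
  by_cases h1α : P1 α = 0
  · exact IsJordanLine.hasJordanBlock (b := true) (c := false) hαV ⟨hα, by simp [h0], by simp [h1α]⟩
  by_cases h1α' : P1 α = α
  · exact IsJordanLine.hasJordanBlock (b := true) (c := true) hαV ⟨hα, by simp [h0], by simp [h1α']⟩
  exact hasJordanBlock_of_apply_eq_smul hP0 hP1 hV1 hαV hα h0 hμ h1α h1α'

theorem hasJordanBasis_of_mem_invtSubmodule [FiniteDimensional ℂ E] (V : Submodule ℂ E)
    (hV0 : V ∈ P0.invtSubmodule) (hV1 : V ∈ P1.invtSubmodule) : HasJordanBasis P0 P1 V := by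
  induction hn : Module.finrank ℂ V using Nat.strong_induction_on generalizing V with
  | _ n ih =>
  rcases eq_or_ne V ⊥ with rfl | hV
  · exact hasJordanBasis_bot
  obtain ⟨W, hWV, hW, hW0, hW1, hWbasis⟩ := hasJordanBlock_of_ne_bot hP0 hP1 hV0 hV1 hV
  have hrank := Submodule.finrank_add_inf_finrank_orthogonal hWV
  have hWrank := Submodule.one_le_finrank_iff.mpr hW
  have hV'0 := Module.End.invtSubmodule.inf_mem
    (hP0.isSymmetric.orthogonalComplement_mem_invtSubmodule hW0) hV0
  have hV'1 := Module.End.invtSubmodule.inf_mem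
    (hP1.isSymmetric.orthogonalComplement_mem_invtSubmodule hW1) hV1
  rw [← Submodule.sup_orthogonal_inf_of_hasOrthogonalProjection hWV]
  exact hWbasis.sup (ih _ (by omega) (Wᗮ ⊓ V) hV'0 hV'1 rfl)
    ((Submodule.isOrtho_orthogonal_right W).mono_right inf_le_left)

end Projections

/-- Jordan's lemma: joint structure of two orthogonal projections on an
`N`-dimensional complex Hilbert space. -/
theorem stmt1 {N : ℕ}
    (P0 P1 : EuclideanSpace ℂ (Fin N) →ₗ[ℂ] EuclideanSpace ℂ (Fin N))
    (hP0idem : P0 ∘ₗ P0 = P0) (hP0sym : P0.IsSymmetric)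
    (hP1idem : P1 ∘ₗ P1 = P1) (hP1sym : P1.IsSymmetric) :
    ∃ (l : ℕ) (m : Bool → Bool → ℕ)
      (α αp β βp : Fin l → EuclideanSpace ℂ (Fin N))
      (τ : (b : Bool) → (c : Bool) → Fin (m b c) → EuclideanSpace ℂ (Fin N)),
      -- counting: the one-dimensional pieces account for the remaining N − 2ℓ dimensions
      2 * l + (m false false + m false true + m true false + m true true) = N ∧
      -- the vectors α_j, α_j^⊥ together with the α_j^{(bc)} form an orthonormal basis of H,
      -- i.e. the subspaces S_j = span{α_j, α_j^⊥} and T_j^{(bc)} = span{α_j^{(bc)}}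
      -- give an orthogonal decomposition of H
      Orthonormal ℂ
        (Sum.elim (Sum.elim α αp)
          (fun s : Σ bc : Bool × Bool, Fin (m bc.1 bc.2) => τ s.1.1 s.1.2 s.2)) ∧
      Submodule.span ℂ
        (Set.range (Sum.elim (Sum.elim α αp)
          (fun s : Σ bc : Bool × Bool, Fin (m bc.1 bc.2) => τ s.1.1 s.1.2 s.2))) = ⊤ ∧
      -- (1) structure inside each two-dimensional subspace S_j
      (∀ j : Fin l,
        P0 (α j) = α j ∧ P0 (αp j) = 0 ∧
        P1 (β j) = β j ∧ P1 (βp j) = 0 ∧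
        ‖β j‖ = 1 ∧ ‖βp j‖ = 1 ∧ ⟪β j, βp j⟫ = 0 ∧
        β j ∈ Submodule.span ℂ {α j, αp j} ∧ βp j ∈ Submodule.span ℂ {α j, αp j} ∧
        (0 < (⟪α j, P1 (α j)⟫).re ∧ (⟪α j, P1 (α j)⟫).re < 1) ∧
        α j = (Real.sqrt ((⟪α j, P1 (α j)⟫).re) : ℂ) • β j
              + (Real.sqrt (1 - (⟪α j, P1 (α j)⟫).re) : ℂ) • βp j ∧
        β j = (Real.sqrt ((⟪α j, P1 (α j)⟫).re) : ℂ) • α j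
              + (Real.sqrt (1 - (⟪α j, P1 (α j)⟫).re) : ℂ) • αp j) ∧
      -- (2) the one-dimensional subspaces T_j^{(bc)}
      (∀ (b c : Bool) (k : Fin (m b c)),
        ‖τ b c k‖ = 1 ∧
        P0 (τ b c k) = (if b then (1:ℂ) else 0) • τ b c k ∧
        P1 (τ b c k) = (if c then (1:ℂ) else 0) • τ b c k) := by
  obtain ⟨ιS, ιT, lab, α, αp, β, βp, τ, hON, hspan, hpair, hline⟩ :=
    hasJordanBasis_of_mem_invtSubmodule (P0 := P0) (P1 := P1) ⟨hP0idem, hP0sym⟩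
      ⟨hP1idem, hP1sym⟩ ⊤ (Module.End.invtSubmodule.top_mem _)
      (Module.End.invtSubmodule.top_mem _)
  have := hON.linearIndependent.finite
  have : Finite ιS := .of_injective (fun i => (.inl (.inl i) : (ιS ⊕ ιS) ⊕ ιT)) (by intro; simp)
  have : Finite ιT := .of_injective (fun i => (.inr i : (ιS ⊕ ιS) ⊕ ιT)) Sum.inr_injective
  let eS := (Finite.equivFin ιS).symm
  obtain ⟨m, eT, hlab⟩ := exists_sigma_fin_equiv lab
  let e := Equiv.sumCongr (Equiv.sumCongr eS eS) eT
  let τ' : (b c : Bool) → Fin (m (b, c)) → EuclideanSpace ℂ (Fin N) :=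
    fun b c k => τ (eT ⟨(b, c), k⟩)
  have hF : Sum.elim (Sum.elim (α ∘ eS) (αp ∘ eS)) (fun s => τ' s.1.1 s.1.2 s.2) =
      Sum.elim (Sum.elim α αp) τ ∘ e := by
    funext x; rcases x with (i | i) | s <;> rfl
  have hON' := hON.comp e e.injective
  have hspan' : Submodule.span ℂ (Set.range (Sum.elim (Sum.elim α αp) τ ∘ e)) = ⊤ := by
    rw [e.surjective.range_comp, hspan]
  refine ⟨_, fun b c => m (b, c), α ∘ eS, αp ∘ eS, β ∘ eS, βp ∘ eS, τ', ?_, hF ▸ hON',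
    hF ▸ hspan', fun j => hpair _, fun b c k => ?_⟩
  · have hcard := finrank_span_eq_card hON'.linearIndependent
    rw [hspan', finrank_top, finrank_euclideanSpace_fin] at hcard
    simp only [Fintype.card_sum, Fintype.card_fin, Fintype.card_sigma, Fintype.sum_prod_type,
      Fintype.sum_bool] at hcard ⊢
    omega
  · have := hline (eT ⟨(b, c), k⟩)
    rwa [hlab] at this
end

section
/- Fix p ∈ (0,1). Define sequences (P_k) and (P_k^⊥) by P₀ = P₀^⊥ = 0 and the recurrences P_{k+1} = p + (1−p)² P_k + (1−p)p P_k^⊥ and P_{k+1}^⊥ = (1−p) + p(1−p) P_k + p² P_k^⊥. Then for all T ≥ 1, P_T = 1 − (1 − 2p + 2p²)^{T−1} (1 − p). -/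
/-- Closed form for the alternating-measurement success-probability recurrence. -/
theorem stmt2 (p : ℝ) (hp0 : 0 < p) (hp1 : p < 1)
    (P Pp : ℕ → ℝ) (hP0 : P 0 = 0) (hPp0 : Pp 0 = 0)
    (hP : ∀ k, P (k + 1) = p + (1 - p) ^ 2 * P k + (1 - p) * p * Pp k)
    (hPp : ∀ k, Pp (k + 1) = (1 - p) + p * (1 - p) * P k + p ^ 2 * Pp k) :
    ∀ T : ℕ, 1 ≤ T → P T = 1 - (1 - 2 * p + 2 * p ^ 2) ^ (T - 1) * (1 - p) := by
  have key : ∀ n : ℕ, P (n + 1) = 1 - (1 - 2 * p + 2 * p ^ 2) ^ n * (1 - p) ∧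
      Pp (n + 1) = 1 - (1 - 2 * p + 2 * p ^ 2) ^ n * p := by
    intro n
    induction n with
    | zero => simp [hP 0, hPp 0, hP0, hPp0]
    | succ n ih =>
      obtain ⟨h1, h2⟩ := ih
      constructor
      · rw [hP (n + 1), h1, h2, pow_succ]; ring
      · rw [hPp (n + 1), h1, h2, pow_succ]; ring
  intro T hT
  obtain ⟨n, rfl⟩ := Nat.exists_eq_add_of_le hT
  rw [add_comm]; simpa using (key n).1
end

section
/- Let H = H_X ⊗ H_Y be a finite-dimensional Hilbert space, Π a projection on H, and 0 < t < 1. Then there exists an orthogonal decomposition H = S_{<t} ⊕ S_{≥t} such that both S_{<t} and S_{≥t} are invariant under Π and under I_X ⊗ |0⟩⟨0|_Y, and moreover: for every unit vector |φ⟩ ∈ H_X with |φ⟩|0⟩ ∈ S_{<t} one has ‖Π|φ⟩|0⟩‖² < t, and for every unit vector |φ⟩ ∈ H_X with |φ⟩|0⟩ ∈ S_{≥t} one has ‖Π|φ⟩|0⟩‖² ≥ t. -/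
/-!
Let `E φ = φ ⊗ e₀`, an isometry `H_X → H`, so that `I_X ⊗ |e₀⟩⟨e₀| = E E†`. The compression
`M = E† Π E` is self-adjoint on `H_X` with `⟪M φ, φ⟫ = ‖Π E φ‖²`. Take `X ⊆ H_X` spanned by the
eigenvectors of `M` with eigenvalue `< t` and `S_{<t} = E X + Π E X`. Idempotence of `Π` makes
`S_{<t}` invariant under `Π`, and `E†` maps it into `X` (because `M X ⊆ X`), so it is invariant
under `E E†`; orthogonal complements of invariant subspaces of self-adjoint operators are
invariant. Finally `E φ ∈ S_{<t}` forces `φ = E† E φ ∈ X`, while `E φ ⊥ S_{<t}` forces `φ ⊥ X`,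
and expanding `⟪M φ, φ⟫` in an eigenbasis of `M` gives the two bounds.
-/

open scoped ComplexInnerProductSpace

/-- The product state `|φ⟩|e₀⟩` in `H_X ⊗ H_Y`, modelled as
`EuclideanSpace ℂ (Fin nx × Fin ny)`. -/
noncomputable def tensProd {nx ny : ℕ} (φ : EuclideanSpace ℂ (Fin nx))
    (e₀ : EuclideanSpace ℂ (Fin ny)) : EuclideanSpace ℂ (Fin nx × Fin ny) :=
  WithLp.toLp 2 (fun q : Fin nx × Fin ny => φ q.1 * e₀ q.2)

/-- The operator `I_X ⊗ |e₀⟩⟨e₀|_Y` on `H_X ⊗ H_Y`. -/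
noncomputable def idTensProj {nx ny : ℕ} (e₀ : EuclideanSpace ℂ (Fin ny))
    (ψ : EuclideanSpace ℂ (Fin nx × Fin ny)) : EuclideanSpace ℂ (Fin nx × Fin ny) :=
  WithLp.toLp 2 (fun q : Fin nx × Fin ny => e₀ q.2 * ∑ j, (starRingEnd ℂ) (e₀ j) * ψ (q.1, j))

open scoped InnerProductSpace

namespace LinearMap.IsSymmetric

variable {𝕜 E : Type*} [RCLike 𝕜] [NormedAddCommGroup E] [InnerProductSpace 𝕜 E]
  [FiniteDimensional 𝕜 E] {T : E →ₗ[𝕜] E} (hT : T.IsSymmetric) {n : ℕ}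
  (hn : Module.finrank 𝕜 E = n) {t : ℝ} {x : E}

/-- The span of the eigenvectors of `T` with eigenvalue `< t`, cut out by the vanishing of the
other eigen-coordinates. -/
noncomputable def spectralSubspaceLT (t : ℝ) : Submodule 𝕜 E :=
  ⨅ (i) (_ : t ≤ hT.eigenvalues hn i), LinearMap.ker (innerₛₗ 𝕜 (hT.eigenvectorBasis hn i))

lemma mem_spectralSubspaceLT :
    x ∈ hT.spectralSubspaceLT hn t ↔
      ∀ i, t ≤ hT.eigenvalues hn i → ⟪hT.eigenvectorBasis hn i, x⟫_𝕜 = 0 := by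
  simp [spectralSubspaceLT, Submodule.mem_iInf]

lemma spectralSubspaceLT_mem_invtSubmodule (t : ℝ) :
    hT.spectralSubspaceLT hn t ∈ Module.End.invtSubmodule T := by
  intro x hx
  simp only [Submodule.mem_comap, mem_spectralSubspaceLT] at hx ⊢
  intro i hi
  rw [← hT, hT.apply_eigenvectorBasis, inner_smul_left, hx i hi, mul_zero]

lemma inner_eigenvectorBasis_eq_zero_of_mem_orthogonal
    (hx : x ∈ (hT.spectralSubspaceLT hn t)ᗮ) {i : Fin n} (hi : hT.eigenvalues hn i < t) :
    ⟪hT.eigenvectorBasis hn i, x⟫_𝕜 = 0 := by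
  refine (Submodule.mem_orthogonal _ _).mp hx _ ((hT.mem_spectralSubspaceLT hn).mpr ?_)
  intro j hj
  have hji : j ≠ i := by rintro rfl; exact hj.not_gt hi
  exact (hT.eigenvectorBasis hn).orthonormal.inner_eq_zero hji

lemma re_inner_apply_self_eq_sum (x : E) :
    RCLike.re ⟪T x, x⟫_𝕜 =
      ∑ i, hT.eigenvalues hn i * ‖⟪hT.eigenvectorBasis hn i, x⟫_𝕜‖ ^ 2 := by
  rw [← (hT.eigenvectorBasis hn).sum_inner_mul_inner, map_sum]
  refine Finset.sum_congr rfl fun i _ => ?_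
  rw [hT, hT.apply_eigenvectorBasis, inner_smul_right, ← inner_conj_symm x, mul_assoc,
    RCLike.conj_mul, ← RCLike.ofReal_pow, ← RCLike.ofReal_mul, RCLike.ofReal_re]

lemma re_inner_apply_self_lt (hx : x ∈ hT.spectralSubspaceLT hn t) (hx0 : x ≠ 0) :
    RCLike.re ⟪T x, x⟫_𝕜 < t * ‖x‖ ^ 2 := by
  have hcoord := (hT.mem_spectralSubspaceLT hn).mp hx
  rw [hT.re_inner_apply_self_eq_sum hn, ← (hT.eigenvectorBasis hn).sum_sq_norm_inner_right,
    Finset.mul_sum]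
  set b := hT.eigenvectorBasis hn
  obtain ⟨i₀, hi₀⟩ : ∃ i, ⟪b i, x⟫_𝕜 ≠ 0 := by
    by_contra! h
    exact hx0 (by rw [← b.sum_repr' x]; simp [h])
  refine Finset.sum_lt_sum (fun i _ => ?_) ⟨i₀, Finset.mem_univ _, ?_⟩
  · by_cases hi : t ≤ hT.eigenvalues hn i
    · simp [hcoord i hi]
    · exact mul_le_mul_of_nonneg_right (not_le.mp hi).le (sq_nonneg _)
  · have hlt : hT.eigenvalues hn i₀ < t := not_le.mp fun h => hi₀ (hcoord i₀ h)
    exact mul_lt_mul_of_pos_right hlt (by positivity)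

lemma le_re_inner_apply_self (hx : x ∈ (hT.spectralSubspaceLT hn t)ᗮ) :
    t * ‖x‖ ^ 2 ≤ RCLike.re ⟪T x, x⟫_𝕜 := by
  rw [hT.re_inner_apply_self_eq_sum hn, ← (hT.eigenvectorBasis hn).sum_sq_norm_inner_right,
    Finset.mul_sum]
  refine Finset.sum_le_sum fun i _ => ?_
  by_cases hi : hT.eigenvalues hn i < t
  · simp [hT.inner_eigenvectorBasis_eq_zero_of_mem_orthogonal hn hx hi]
  · exact mul_le_mul_of_nonneg_right (not_lt.mp hi) (sq_nonneg _)

end LinearMap.IsSymmetric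

namespace LinearMap

variable {𝕜 H K : Type*} [RCLike 𝕜] [NormedAddCommGroup H] [InnerProductSpace 𝕜 H]
  [NormedAddCommGroup K] [InnerProductSpace 𝕜 K]

lemma IsSymmetric.re_inner_apply_self_eq_norm_sq {P : H →ₗ[𝕜] H} (hP : P.IsSymmetric)
    (hP' : IsIdempotentElem P) (y : H) : RCLike.re ⟪P y, y⟫_𝕜 = ‖P y‖ ^ 2 := by
  rw [← inner_self_eq_norm_sq (𝕜 := 𝕜), ← hP, ← Module.End.mul_apply, hP'.eq]

lemma sup_map_mem_invtSubmodule {P : H →ₗ[𝕜] H} (hP : IsIdempotentElem P)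
    (V : Submodule 𝕜 H) : V ⊔ V.map P ∈ Module.End.invtSubmodule P := by
  rw [Module.End.mem_invtSubmodule_iff_map_le, Submodule.map_sup, ← Submodule.map_comp,
    ← Module.End.mul_eq_comp, hP.eq]
  exact sup_le le_sup_right le_sup_right

variable [FiniteDimensional 𝕜 H] [FiniteDimensional 𝕜 K] {E : K →ₗ[𝕜] H}

lemma inner_apply_apply_of_adjoint_comp_self (hE : E.adjoint ∘ₗ E = id) (x y : K) :
    ⟪E x, E y⟫_𝕜 = ⟪x, y⟫_𝕜 := by
  rw [← adjoint_inner_right, ← comp_apply, hE, id_apply]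

lemma re_inner_adjoint_conj_apply_self {P : H →ₗ[𝕜] H} (hP : P.IsSymmetric)
    (hP' : IsIdempotentElem P) (x : K) :
    RCLike.re ⟪(E.adjoint ∘ₗ P ∘ₗ E) x, x⟫_𝕜 = ‖P (E x)‖ ^ 2 := by
  rw [comp_apply, adjoint_inner_left, ← hP.re_inner_apply_self_eq_norm_sq hP', comp_apply]

lemma map_adjoint_sup_map_le (hE : E.adjoint ∘ₗ E = id) {P : H →ₗ[𝕜] H} {X : Submodule 𝕜 K}
    (hX : X ∈ Module.End.invtSubmodule (E.adjoint ∘ₗ P ∘ₗ E)) :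
    (X.map E ⊔ (X.map E).map P).map E.adjoint ≤ X := by
  rw [Submodule.map_sup, ← Submodule.map_comp, hE, Submodule.map_id, ← Submodule.map_comp,
    ← Submodule.map_comp, comp_assoc]
  exact sup_le le_rfl ((Module.End.mem_invtSubmodule_iff_map_le _).mp hX)

theorem exists_invtSubmodule_norm_sq_lt_and_le
    {P : H →ₗ[𝕜] H} (hP : P.IsSymmetric) (hP' : IsIdempotentElem P)
    (hE : E.adjoint ∘ₗ E = id) (t : ℝ) :
    ∃ S : Submodule 𝕜 H,
      S ∈ Module.End.invtSubmodule P ∧ Sᗮ ∈ Module.End.invtSubmodule P ∧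
      S ∈ Module.End.invtSubmodule (E ∘ₗ E.adjoint) ∧
      Sᗮ ∈ Module.End.invtSubmodule (E ∘ₗ E.adjoint) ∧
      (∀ x, E x ∈ S → x ≠ 0 → ‖P (E x)‖ ^ 2 < t * ‖x‖ ^ 2) ∧
      (∀ x, E x ∈ Sᗮ → t * ‖x‖ ^ 2 ≤ ‖P (E x)‖ ^ 2) := by
  have hM : (E.adjoint ∘ₗ P ∘ₗ E).IsSymmetric := hP.adjoint_conj E
  set X := hM.spectralSubspaceLT rfl t
  set S := X.map E ⊔ (X.map E).map P
  have hSX : S.map E.adjoint ≤ X :=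
    map_adjoint_sup_map_le hE (hM.spectralSubspaceLT_mem_invtSubmodule rfl t)
  have hSP : S ∈ Module.End.invtSubmodule P := sup_map_mem_invtSubmodule hP' _
  have hSQ : S ∈ Module.End.invtSubmodule (E ∘ₗ E.adjoint) := fun y hy =>
    Submodule.mem_sup_left (Submodule.mem_map_of_mem (hSX (Submodule.mem_map_of_mem hy)))
  have hmem : ∀ x, E x ∈ S → x ∈ X := fun x hx => by
    simpa [← comp_apply, hE] using hSX (Submodule.mem_map_of_mem hx)
  have hmem_orth : ∀ x, E x ∈ Sᗮ → x ∈ Xᗮ := fun x hx y hy => by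
    rw [← inner_apply_apply_of_adjoint_comp_self hE]
    exact hx _ (Submodule.mem_sup_left (Submodule.mem_map_of_mem hy))
  refine ⟨S, hSP, hP.orthogonalComplement_mem_invtSubmodule hSP, hSQ,
    (isSymmetric_self_comp_adjoint E).orthogonalComplement_mem_invtSubmodule hSQ,
    fun x hx hx0 => ?_, fun x hx => ?_⟩
  · rw [← re_inner_adjoint_conj_apply_self hP hP']
    exact hM.re_inner_apply_self_lt rfl (hmem x hx) hx0
  · rw [← re_inner_adjoint_conj_apply_self hP hP']
    exact hM.le_re_inner_apply_self rfl (hmem_orth x hx)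

end LinearMap

section TensorWithFixedVector

variable {nx ny : ℕ} (e₀ : EuclideanSpace ℂ (Fin ny))

noncomputable def tensProdLinear :
    EuclideanSpace ℂ (Fin nx) →ₗ[ℂ] EuclideanSpace ℂ (Fin nx × Fin ny) where
  toFun φ := tensProd φ e₀
  map_add' φ ψ := PiLp.ext fun q => by simp [tensProd, add_mul]
  map_smul' c φ := PiLp.ext fun q => by simp [tensProd, mul_assoc]

@[simp]
lemma tensProdLinear_apply (φ : EuclideanSpace ℂ (Fin nx)) : tensProdLinear e₀ φ = tensProd φ e₀ :=
  rfl

noncomputable def partialInner :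
    EuclideanSpace ℂ (Fin nx × Fin ny) →ₗ[ℂ] EuclideanSpace ℂ (Fin nx) where
  toFun ψ := WithLp.toLp 2 fun i => ∑ j, starRingEnd ℂ (e₀ j) * ψ (i, j)
  map_add' ψ ξ := PiLp.ext fun i => by simp [mul_add, Finset.sum_add_distrib]
  map_smul' c ψ := PiLp.ext fun i => by simp [Finset.mul_sum, mul_left_comm]

lemma partialInner_eq_adjoint : partialInner e₀ = (tensProdLinear e₀ (nx := nx)).adjoint := by
  refine (LinearMap.eq_adjoint_iff _ _).mpr fun ψ φ => ?_
  simp only [PiLp.inner_apply, RCLike.inner_apply', partialInner, tensProdLinear, tensProd,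
    LinearMap.coe_mk, AddHom.coe_mk, Fintype.sum_prod_type, map_sum, map_mul,
    Complex.conj_conj, Finset.sum_mul]
  exact Finset.sum_congr rfl fun i _ => Finset.sum_congr rfl fun j _ => by ring

lemma adjoint_tensProdLinear_comp_self (he₀ : ‖e₀‖ = 1) :
    (tensProdLinear e₀ (nx := nx)).adjoint ∘ₗ tensProdLinear e₀ = LinearMap.id := by
  have hnorm : ∑ j, starRingEnd ℂ (e₀ j) * e₀ j = 1 := by
    have h := inner_self_eq_norm_sq_to_K (𝕜 := ℂ) e₀
    simp only [PiLp.inner_apply, RCLike.inner_apply', he₀] at h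
    simpa using h
  ext φ i
  rw [← partialInner_eq_adjoint]
  simp [partialInner, tensProdLinear, tensProd, mul_left_comm _ (φ i), ← Finset.mul_sum, hnorm]

lemma idTensProj_eq_comp_adjoint (ψ : EuclideanSpace ℂ (Fin nx × Fin ny)) :
    idTensProj e₀ ψ = (tensProdLinear e₀ ∘ₗ (tensProdLinear e₀).adjoint) ψ := by
  rw [LinearMap.comp_apply, ← partialInner_eq_adjoint]
  exact PiLp.ext fun q => mul_comm _ _

end TensorWithFixedVector

theorem stmt6_general {nx ny : ℕ}
    (P : EuclideanSpace ℂ (Fin nx × Fin ny) →ₗ[ℂ] EuclideanSpace ℂ (Fin nx × Fin ny))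
    (hPidem : P ∘ₗ P = P) (hPsym : P.IsSymmetric)
    (e₀ : EuclideanSpace ℂ (Fin ny)) (he₀ : ‖e₀‖ = 1)
    (t : ℝ) :
    ∃ Slt Sge : Submodule ℂ (EuclideanSpace ℂ (Fin nx × Fin ny)),
      Sge = Sltᗮ ∧
      (∀ x ∈ Slt, P x ∈ Slt) ∧ (∀ x ∈ Sge, P x ∈ Sge) ∧
      (∀ x ∈ Slt, idTensProj e₀ x ∈ Slt) ∧ (∀ x ∈ Sge, idTensProj e₀ x ∈ Sge) ∧
      (∀ φ : EuclideanSpace ℂ (Fin nx), ‖φ‖ = 1 → tensProd φ e₀ ∈ Slt →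
        ‖P (tensProd φ e₀)‖ ^ 2 < t) ∧
      (∀ φ : EuclideanSpace ℂ (Fin nx), ‖φ‖ = 1 → tensProd φ e₀ ∈ Sge →
        t ≤ ‖P (tensProd φ e₀)‖ ^ 2) := by
  have hE := adjoint_tensProdLinear_comp_self (nx := nx) e₀ he₀
  obtain ⟨S, hSP, hSP', hSQ, hSQ', hlt, hge⟩ :=
    LinearMap.exists_invtSubmodule_norm_sq_lt_and_le hPsym hPidem hE t
  refine ⟨S, Sᗮ, rfl, hSP, hSP', ?_, ?_, fun φ hφ hS => ?_, fun φ hφ hS => ?_⟩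
  · exact fun x hx => idTensProj_eq_comp_adjoint e₀ x ▸ hSQ hx
  · exact fun x hx => idTensProj_eq_comp_adjoint e₀ x ▸ hSQ' hx
  · simpa [hφ] using hlt φ hS (norm_ne_zero_iff.mp (hφ ▸ one_ne_zero))
  · simpa [hφ] using hge φ hS

/-- Decomposition of `H = H_X ⊗ H_Y` into `Π`- and `I_X ⊗ |0⟩⟨0|_Y`-invariant subspaces
`S_{<t}` and `S_{≥t}` on which the success probability of `Π` on states of the form
`|φ⟩|0⟩` is `< t`, resp. `≥ t`. -/
theorem stmt6 {nx ny : ℕ}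
    (P : EuclideanSpace ℂ (Fin nx × Fin ny) →ₗ[ℂ] EuclideanSpace ℂ (Fin nx × Fin ny))
    (hPidem : P ∘ₗ P = P) (hPsym : P.IsSymmetric)
    (e₀ : EuclideanSpace ℂ (Fin ny)) (he₀ : ‖e₀‖ = 1)
    (t : ℝ) (ht0 : 0 < t) (ht1 : t < 1) :
    ∃ Slt Sge : Submodule ℂ (EuclideanSpace ℂ (Fin nx × Fin ny)),
      Sge = Sltᗮ ∧
      (∀ x ∈ Slt, P x ∈ Slt) ∧ (∀ x ∈ Sge, P x ∈ Sge) ∧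
      (∀ x ∈ Slt, idTensProj e₀ x ∈ Slt) ∧ (∀ x ∈ Sge, idTensProj e₀ x ∈ Sge) ∧
      (∀ φ : EuclideanSpace ℂ (Fin nx), ‖φ‖ = 1 → tensProd φ e₀ ∈ Slt →
        ‖P (tensProd φ e₀)‖ ^ 2 < t) ∧
      (∀ φ : EuclideanSpace ℂ (Fin nx), ‖φ‖ = 1 → tensProd φ e₀ ∈ Sge →
        t ≤ ‖P (tensProd φ e₀)‖ ^ 2) :=
  stmt6_general P hPidem hPsym e₀ he₀ t
end
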